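/- arXiv:2205.04578 — 3 statements merged into one kernel-verified Lean document; each statement's English description precedes it below -/
import Mathlib

section
/- For real numbers α and β with |β| < 1, a nonnegative integer P1 and a real P2 > 0, the integral ∫₀^π (1 + α cos θ)^{P1} / (1 + β cos θ)^{P2} dθ equals (1-β)^{-P2} · Σ_{q=0}^{P1} C(P1,q) (2α)^q (1-α)^{P1-q} · (√π Γ(q+1/2)/Γ(q+1)) · ₂F₁(P2, q+1/2; q+1; -2β/(1-β)). -/
open Real MeasureTheory Set

/-- Gauss hypergeometric function via Euler's integral representation
    (valid for `c > b > 0` and `z < 1`). -/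
noncomputable def hyp2F1 (a b c z : ℝ) : ℝ :=
  (Real.Gamma c / (Real.Gamma b * Real.Gamma (c - b))) *
    ∫ t in (0:ℝ)..1, t ^ (b - 1) * (1 - t) ^ (c - b - 1) * (1 - t * z) ^ (-a)

/-!
Writing `1 + α cos θ = α (1 + cos θ) + (1 - α)` and expanding binomially reduces the integral
to the moments `∫₀^π (1 + cos θ)^q (1 + β cos θ)^(-P₂) dθ`. The substitution
`t = (1 + cos θ) / 2` turns each moment into the Euler integral
`∫₀¹ t^(q - 1/2) (1 - t)^(-1/2) (1 - t z)^(-P₂) dt` with `z = -2β / (1 - β)`, because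
`1 + β cos θ = (1 - β) (1 - t z)`; the remaining constant is `Γ(1/2) = √π`.
-/

lemma one_add_mul_cos_pos {β : ℝ} (hβ : |β| < 1) (θ : ℝ) : 0 < 1 + β * cos θ := by
  have h : |β * cos θ| < 1 :=
    calc |β * cos θ| = |β| * |cos θ| := abs_mul _ _
      _ ≤ |β| := mul_le_of_le_one_right (abs_nonneg β) (abs_cos_le_one θ)
      _ < 1 := hβ
  linarith [(abs_lt.mp h).1]

lemma one_add_mul_pow_eq_sum {R : Type*} [CommRing R] (a x : R) (n : ℕ) :
    (1 + a * x) ^ n = ∑ q ∈ Finset.range (n + 1),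
      (n.choose q : R) * a ^ q * (1 - a) ^ (n - q) * (1 + x) ^ q := by
  have h : 1 + a * x = a * (1 + x) + (1 - a) := by ring
  rw [h, add_pow]
  refine Finset.sum_congr rfl fun q _ => ?_
  rw [mul_pow]
  ring

lemma image_half_one_add_cos_Ioo : (fun θ => (1 + cos θ) / 2) '' Ioo 0 π = Ioo (0 : ℝ) 1 := by
  ext t
  constructor
  · rintro ⟨θ, ⟨h0, hπ⟩, rfl⟩
    have hc1 : cos θ < cos 0 :=
      strictAntiOn_cos (left_mem_Icc.mpr pi_pos.le) ⟨h0.le, hπ.le⟩ h0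
    have hc2 : cos π < cos θ :=
      strictAntiOn_cos ⟨h0.le, hπ.le⟩ (right_mem_Icc.mpr pi_pos.le) hπ
    rw [cos_zero] at hc1
    rw [cos_pi] at hc2
    constructor <;> linarith
  · rintro ⟨h0, h1⟩
    refine ⟨arccos (2 * t - 1), ⟨arccos_pos.mpr (by linarith), ?_⟩, ?_⟩
    · exact (arccos_le_pi _).lt_of_ne (by rw [Ne, arccos_eq_pi]; linarith)
    · simp only [cos_arccos (by linarith : -1 ≤ 2 * t - 1) (by linarith)]
      ring

/-- The substitution `t = (1 + cos θ) / 2`, under which `dt = -(sin θ / 2) dθ` and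
`t (1 - t) = (sin θ / 2) ^ 2`. -/
lemma integral_mul_rpow_neg_half_eq_integral_cos (g : ℝ → ℝ) :
    ∫ t in (0:ℝ)..1, (t * (1 - t)) ^ (-(1/2) : ℝ) * g t =
      ∫ θ in (0:ℝ)..π, g ((1 + cos θ) / 2) := by
  rw [intervalIntegral.integral_of_le zero_le_one, intervalIntegral.integral_of_le pi_pos.le,
    integral_Ioc_eq_integral_Ioo, integral_Ioc_eq_integral_Ioo, ← image_half_one_add_cos_Ioo,
    integral_image_eq_integral_abs_deriv_smul measurableSet_Ioo
      (f' := fun θ => -sin θ / 2)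
      (fun θ _ => (((hasDerivAt_cos θ).const_add 1).div_const 2).hasDerivWithinAt)
      (fun x hx y hy hxy => injOn_cos ⟨hx.1.le, hx.2.le⟩ ⟨hy.1.le, hy.2.le⟩
        (by linarith))]
  refine setIntegral_congr_fun measurableSet_Ioo fun θ ⟨h0, hπ⟩ => ?_
  have hs : 0 < sin θ := sin_pos_of_pos_of_lt_pi h0 hπ
  have hprod : (1 + cos θ) / 2 * (1 - (1 + cos θ) / 2) = (sin θ / 2) ^ 2 := by
    linear_combination -(sin_sq_add_cos_sq θ) / 4
  have hjac : |-sin θ / 2| * ((sin θ / 2) ^ 2) ^ (-(1/2) : ℝ) = 1 := by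
    rw [rpow_neg (by positivity), ← sqrt_eq_rpow, sqrt_sq (by positivity),
      abs_of_neg (by linarith)]
    field_simp
  simp only [smul_eq_mul, hprod, ← mul_assoc, hjac, one_mul]

lemma hyp2F1_nat_add_half (a z : ℝ) (q : ℕ) :
    hyp2F1 a ((q : ℝ) + 1/2) ((q : ℝ) + 1) z =
      Gamma ((q : ℝ) + 1) / (Gamma ((q : ℝ) + 1/2) * sqrt π) *
        ∫ θ in (0:ℝ)..π, ((1 + cos θ) / 2) ^ q * (1 - (1 + cos θ) / 2 * z) ^ (-a) := by
  have hΓ : Gamma ((q : ℝ) + 1 - ((q : ℝ) + 1/2)) = sqrt π := by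
    rw [show (q : ℝ) + 1 - ((q : ℝ) + 1/2) = 1/2 by ring, Gamma_one_half_eq]
  rw [hyp2F1, hΓ]
  congr 1
  refine (intervalIntegral.integral_congr_ae (ae_of_all _ fun t ht => ?_)).trans
    (integral_mul_rpow_neg_half_eq_integral_cos fun t => t ^ q * (1 - t * z) ^ (-a))
  rw [uIoc_of_le zero_le_one] at ht
  obtain ⟨ht0, ht1⟩ := ht
  have e1 : (q : ℝ) + 1/2 - 1 = q + -(1/2) := by ring
  have e2 : (q : ℝ) + 1 - ((q : ℝ) + 1/2) - 1 = -(1/2) := by ring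
  simp only [e1, e2, rpow_add ht0, rpow_natCast, mul_rpow ht0.le (sub_nonneg.mpr ht1)]
  ring

lemma integral_one_add_cos_pow_mul_rpow {β : ℝ} (hβ : |β| < 1) (P : ℝ) (q : ℕ) :
    ∫ θ in (0:ℝ)..π, (1 + cos θ) ^ q * (1 + β * cos θ) ^ (-P) =
      (1 - β) ^ (-P) * 2 ^ q * (sqrt π * Gamma ((q : ℝ) + 1/2) / Gamma ((q : ℝ) + 1)) *
        hyp2F1 P ((q : ℝ) + 1/2) ((q : ℝ) + 1) (-2 * β / (1 - β)) := by
  have hβ1 : 0 < 1 - β := by linarith [(abs_lt.mp hβ).2]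
  have hintegrand : ∀ θ, ((1 + cos θ) / 2) ^ q * (1 - (1 + cos θ) / 2 * (-2 * β / (1 - β))) ^ (-P)
      = (1 - β) ^ P / 2 ^ q * ((1 + cos θ) ^ q * (1 + β * cos θ) ^ (-P)) := by
    intro θ
    have h : 1 - (1 + cos θ) / 2 * (-2 * β / (1 - β)) = (1 + β * cos θ) / (1 - β) := by
      field_simp
      ring
    rw [h, div_rpow (one_add_mul_cos_pos hβ θ).le hβ1.le, rpow_neg hβ1.le, div_pow]
    have := (rpow_pos_of_pos hβ1 P).ne'
    field_simp
  rw [hyp2F1_nat_add_half, intervalIntegral.integral_congr fun θ _ => hintegrand θ,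
    intervalIntegral.integral_const_mul, rpow_neg hβ1.le]
  set I := ∫ θ in (0:ℝ)..π, (1 + cos θ) ^ q * (1 + β * cos θ) ^ (-P)
  have hΓ : Gamma ((q : ℝ) + 1/2) ≠ 0 := (Gamma_pos_of_pos (by positivity)).ne'
  have hΓ' : Gamma ((q : ℝ) + 1) ≠ 0 := (Gamma_pos_of_pos (by positivity)).ne'
  have := (rpow_pos_of_pos hβ1 P).ne'
  field_simp

theorem stmt_0_general (α β : ℝ) (hβ : |β| < 1) (P1 : ℕ) (P2 : ℝ) :
    (∫ θ in (0:ℝ)..π, (1 + α * Real.cos θ) ^ P1 / (1 + β * Real.cos θ) ^ P2)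
      = (1 - β) ^ (-P2) *
        ∑ q ∈ Finset.range (P1 + 1),
          (P1.choose q : ℝ) * (2 * α) ^ q * (1 - α) ^ (P1 - q) *
            (Real.sqrt π * Real.Gamma ((q : ℝ) + 1/2) / Real.Gamma ((q : ℝ) + 1)) *
            hyp2F1 P2 ((q : ℝ) + 1/2) ((q : ℝ) + 1) (-2 * β / (1 - β)) := by
  have hexpand : ∀ θ, (1 + α * cos θ) ^ P1 / (1 + β * cos θ) ^ P2 =
      ∑ q ∈ Finset.range (P1 + 1), (P1.choose q : ℝ) * α ^ q * (1 - α) ^ (P1 - q) *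
        ((1 + cos θ) ^ q * (1 + β * cos θ) ^ (-P2)) := by
    intro θ
    rw [div_eq_mul_inv, ← rpow_neg (one_add_mul_cos_pos hβ θ).le, one_add_mul_pow_eq_sum,
      Finset.sum_mul]
    exact Finset.sum_congr rfl fun q _ => by ring
  have hint : ∀ q ∈ Finset.range (P1 + 1), IntervalIntegrable
      (fun θ => (P1.choose q : ℝ) * α ^ q * (1 - α) ^ (P1 - q) *
        ((1 + cos θ) ^ q * (1 + β * cos θ) ^ (-P2))) volume 0 π := fun q _ =>
    (continuous_const.mul (((continuous_const.add continuous_cos).pow q).mul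
      ((continuous_const.add (continuous_const.mul continuous_cos)).rpow_const
        fun θ => Or.inl (one_add_mul_cos_pos hβ θ).ne'))).intervalIntegrable _ _
  rw [intervalIntegral.integral_congr fun θ _ => hexpand θ,
    intervalIntegral.integral_finsetSum hint, Finset.mul_sum]
  refine Finset.sum_congr rfl fun q _ => ?_
  rw [intervalIntegral.integral_const_mul, integral_one_add_cos_pow_mul_rpow hβ, mul_pow]
  ring

/-- Integral I1 from the Appendix. -/
theorem stmt_0 (α β : ℝ) (hβ : |β| < 1) (P1 : ℕ) (P2 : ℝ) (hP2 : 0 < P2) :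
    (∫ θ in (0:ℝ)..π, (1 + α * Real.cos θ) ^ P1 / (1 + β * Real.cos θ) ^ P2)
      = (1 - β) ^ (-P2) *
        ∑ q ∈ Finset.range (P1 + 1),
          (P1.choose q : ℝ) * (2 * α) ^ q * (1 - α) ^ (P1 - q) *
            (Real.sqrt π * Real.Gamma ((q : ℝ) + 1/2) / Real.Gamma ((q : ℝ) + 1)) *
            hyp2F1 P2 ((q : ℝ) + 1/2) ((q : ℝ) + 1) (-2 * β / (1 - β)) :=
  stmt_0_general α β hβ P1 P2
end

section
/- The Rician Shadowed power density f(x) = (m/(m+K))^m · ((1+K)/γ̄) · exp(-(1+K)x/γ̄) · ₁F₁(m; 1; K(1+K)x/(γ̄(m+K))) is a probability density on [0,∞): it is nonnegative and integrates to 1, for all real m > 0, K ≥ 0, γ̄ > 0. -/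
/-!
Expanding `₁F₁(a; 1; s x)` as a power series and integrating term by term against `e^{-b x}`
(each term is a Gamma integral `∫ xᵏ e^{-b x} = k!/b^{k+1}`) turns its Laplace transform into
`(1/b) ∑ (a)ₖ/k! (s/b)ᵏ`, the binomial series of `(1 - s/b)^{-a} / b`. For the Rician Shadowed
density, `b = (1+K)/γ̄` and `s = bK/(m+K)`, so this equals `((m+K)/m)^m / b`, which the
normalising constant `(m/(m+K))^m · b` cancels exactly. Nonnegativity holds termwise.
-/

open Real MeasureTheory Set

noncomputable def poch (a : ℝ) (n : ℕ) : ℝ := (ascPochhammer ℝ n).eval a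

/-- Confluent hypergeometric function of the first kind (series). -/
noncomputable def hyp1F1 (a c z : ℝ) : ℝ :=
  ∑' k : ℕ, poch a k / (poch c k * (k.factorial : ℝ)) * z ^ k

open scoped Nat

lemma poch_nonneg {a : ℝ} (ha : 0 ≤ a) (n : ℕ) : 0 ≤ poch a n := by
  induction n with
  | zero => simp [poch]
  | succ n ih => rw [poch, ascPochhammer_succ_eval]; exact mul_nonneg ih (by positivity)

lemma poch_one (n : ℕ) : poch 1 n = n ! := ascPochhammer_eval_one ℝ n

lemma choose_add_sub_one_eq_poch_div_factorial (a : ℝ) (n : ℕ) :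
    Ring.choose (a + n - 1) n = poch a n / n ! := by
  rw [eq_div_iff (by positivity), ← Ring.multichoose_eq, mul_comm, ← nsmul_eq_mul,
    Ring.factorial_nsmul_multichoose_eq_ascPochhammer, Polynomial.ascPochhammer_smeval_eq_eval,
    poch]

lemma hasSum_poch_div_factorial_mul_pow (a : ℝ) {r : ℝ} (hr : |r| < 1) :
    HasSum (fun n ↦ poch a n / n ! * r ^ n) (1 / (1 - r) ^ a) := by
  have := (one_div_one_sub_rpow_hasFPowerSeriesOnBall_zero a).hasSum
    (y := r) (by simpa [enorm_eq_nnnorm, ← NNReal.coe_lt_coe] using hr)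
  simpa [FormalMultilinearSeries.ofScalars_apply_eq, choose_add_sub_one_eq_poch_div_factorial,
    mul_comm] using this

lemma hasSum_hyp1F1_one {a : ℝ} (ha : 0 ≤ a) (z : ℝ) :
    HasSum (fun k ↦ poch a k / (k ! : ℝ) ^ 2 * z ^ k) (hyp1F1 a 1 z) := by
  have hbound : ∀ k : ℕ, ‖poch a k / (k ! : ℝ) ^ 2 * z ^ k‖ ≤
      poch a k / k ! * (1 / 2) ^ k * exp (2 * |z|) := fun k ↦
    calc ‖poch a k / (k ! : ℝ) ^ 2 * z ^ k‖
        = poch a k / k ! * (1 / 2) ^ k * ((2 * |z|) ^ k / k !) := by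
          simp only [norm_mul, norm_div, norm_pow, Real.norm_eq_abs,
            abs_of_nonneg (poch_nonneg ha k), Nat.abs_cast, mul_pow]
          field_simp
          simp
      _ ≤ poch a k / k ! * (1 / 2) ^ k * exp (2 * |z|) := by
          have := poch_nonneg ha k
          gcongr
          exact pow_div_factorial_le_exp _ (by positivity) k
  have hsummable := Summable.of_norm_bounded
    ((hasSum_poch_div_factorial_mul_pow a (r := 1 / 2) (by norm_num)).summable.mul_right _) hbound
  simpa [hyp1F1, poch_one, sq] using hsummable.hasSum

lemma hyp1F1_nonneg {a c z : ℝ} (ha : 0 ≤ a) (hc : 0 ≤ c) (hz : 0 ≤ z) :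
    0 ≤ hyp1F1 a c z :=
  tsum_nonneg fun k ↦ by have := poch_nonneg ha k; have := poch_nonneg hc k; positivity

lemma integral_pow_mul_exp_neg_mul_Ioi (k : ℕ) {b : ℝ} (hb : 0 < b) :
    ∫ x in Ioi (0 : ℝ), x ^ k * exp (-(b * x)) = k ! / b ^ (k + 1) := by
  have := integral_rpow_mul_exp_neg_mul_Ioi (a := k + 1) (by positivity) hb
  rw [add_sub_cancel_right, Gamma_nat_eq_factorial] at this
  norm_cast at this
  simpa [div_eq_inv_mul] using this

lemma integrableOn_pow_mul_exp_neg_mul_Ioi (k : ℕ) {b : ℝ} (hb : 0 < b) :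
    IntegrableOn (fun x ↦ x ^ k * exp (-(b * x))) (Ioi 0) :=
  .of_integral_ne_zero (by rw [integral_pow_mul_exp_neg_mul_Ioi k hb]; positivity)

lemma integral_hyp1F1_one_term {a b : ℝ} (hb : 0 < b) (t : ℝ) (k : ℕ) :
    ∫ x in Ioi (0 : ℝ), poch a k / (k ! : ℝ) ^ 2 * t ^ k * (x ^ k * exp (-(b * x))) =
      poch a k / k ! * (t / b) ^ k / b := by
  rw [integral_const_mul, integral_pow_mul_exp_neg_mul_Ioi k hb, div_pow]
  field_simp
  ring

lemma integral_exp_neg_mul_mul_hyp1F1_one {a b s : ℝ} (ha : 0 ≤ a) (hs : |s| < b) :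
    ∫ x in Ioi (0 : ℝ), exp (-(b * x)) * hyp1F1 a 1 (s * x) = (b / (b - s)) ^ a / b := by
  have hb : 0 < b := (abs_nonneg s).trans_lt hs
  set F : ℝ → ℕ → ℝ → ℝ := fun t k x ↦
    poch a k / (k ! : ℝ) ^ 2 * t ^ k * (x ^ k * exp (-(b * x)))
  have hseries : ∀ x, exp (-(b * x)) * hyp1F1 a 1 (s * x) = ∑' k, F s k x := fun x ↦ by
    rw [← ((hasSum_hyp1F1_one ha (s * x)).mul_left _).tsum_eq]
    congr 1 with k
    ring
  have hnorm : ∀ k, ∫ x in Ioi (0 : ℝ), ‖F s k x‖ = ∫ x in Ioi (0 : ℝ), F |s| k x :=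
    fun k ↦ setIntegral_congr_fun measurableSet_Ioi fun x (hx : 0 < x) ↦ by
      simp only [F, norm_mul, norm_div, norm_pow, Real.norm_eq_abs, Nat.abs_cast, abs_exp,
        abs_of_nonneg (poch_nonneg ha k), abs_of_pos hx]
  have hsummable : Summable fun k ↦ ∫ x in Ioi (0 : ℝ), ‖F s k x‖ := by
    simp_rw [hnorm, F, integral_hyp1F1_one_term hb]
    refine ((hasSum_poch_div_factorial_mul_pow a ?_).div_const b).summable
    rwa [abs_div, abs_abs, abs_of_pos hb, div_lt_one hb]
  have hsum : HasSum (fun k ↦ ∫ x in Ioi (0 : ℝ), F s k x) (1 / (1 - s / b) ^ a / b) := by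
    simp_rw [F, integral_hyp1F1_one_term hb]
    refine (hasSum_poch_div_factorial_mul_pow a ?_).div_const b
    rwa [abs_div, abs_of_pos hb, div_lt_one hb]
  have hint : ∀ k, IntegrableOn (F s k) (Ioi 0) := fun k ↦
    (integrableOn_pow_mul_exp_neg_mul_Ioi k hb).const_mul _
  simp_rw [hseries, ← integral_tsum_of_summable_integral_norm hint hsummable, hsum.tsum_eq]
  have hbs : 0 ≤ (b - s) / b := div_nonneg (by linarith [le_abs_self s]) hb.le
  rw [one_sub_div hb.ne', one_div, ← inv_rpow hbs, inv_div]

/-- The Rician Shadowed power density is a probability density on `[0,∞)`. -/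
theorem stmt_4 (m K γbar : ℝ) (hm : 0 < m) (hK : 0 ≤ K) (hγ : 0 < γbar) :
    (∀ x : ℝ, 0 ≤ x →
        0 ≤ (m / (m + K)) ^ m * ((1 + K) / γbar) * Real.exp (-(1 + K) * x / γbar) *
              hyp1F1 m 1 (K * (1 + K) * x / (γbar * (m + K)))) ∧
    (∫ x in Ioi (0:ℝ),
        (m / (m + K)) ^ m * ((1 + K) / γbar) * Real.exp (-(1 + K) * x / γbar) *
          hyp1F1 m 1 (K * (1 + K) * x / (γbar * (m + K)))) = 1 := by
  have hmK : 0 < m + K := by positivity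
  refine ⟨fun x hx ↦ ?_, ?_⟩
  · have := hyp1F1_nonneg (c := 1) hm.le zero_le_one
      (show 0 ≤ K * (1 + K) * x / (γbar * (m + K)) by positivity)
    positivity
  set b := (1 + K) / γbar
  set s := b * (K / (m + K))
  have hb : 0 < b := by positivity
  have hs : |s| < b := by
    rw [abs_of_nonneg (by positivity)]
    exact mul_lt_of_lt_one_right hb ((div_lt_one hmK).2 (by linarith))
  have hbs : b / (b - s) = (m + K) / m := by
    rw [show b - s = b * (m / (m + K)) by simp only [s]; field_simp; ring,
      div_mul_cancel_left₀ hb.ne', inv_div]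
  have hdensity : ∀ x, (m / (m + K)) ^ m * b * exp (-(1 + K) * x / γbar) *
      hyp1F1 m 1 (K * (1 + K) * x / (γbar * (m + K))) =
      (m / (m + K)) ^ m * b * (exp (-(b * x)) * hyp1F1 m 1 (s * x)) := fun x ↦ by
    rw [show -(1 + K) * x / γbar = -(b * x) by ring,
      show K * (1 + K) * x / (γbar * (m + K)) = s * x by simp only [s, b]; field_simp]
    ring
  simp_rw [hdensity]
  rw [integral_const_mul, integral_exp_neg_mul_mul_hyp1F1_one hm.le hs, hbs, mul_div_assoc',
    mul_right_comm, mul_div_cancel_right₀ _ hb.ne', ← mul_rpow (by positivity) (by positivity),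
    div_mul_div_cancel₀ hmK.ne', div_self hm.ne', one_rpow]
end

section
/- For integer l ≥ 0, α ∈ ℝ, |β| < 1 and P > 0, (1/π)∫₀^π (1+αcos θ)^{l}/(1+βcos θ)^{P} dθ = (1-β)^{-P} Σ_{q=0}^{l} C(l,q)(2α)^q (1-α)^{l-q} (Γ(q+1/2)/(√π Γ(q+1))) ₂F₁(P, q+1/2; q+1; -2β/(1-β)). -/
open Real MeasureTheory Set

/-- The Euler integrand for our parameters. -/
noncomputable def gfun (β : ℝ) (q : ℕ) (P : ℝ) : ℝ → ℝ :=
  fun t => t ^ ((q : ℝ) - 1/2) * (1 - t) ^ (-(1/2) : ℝ) * (1 - t * (-2 * β / (1 - β))) ^ (-P)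

lemma den_pos {β : ℝ} (hβ : |β| < 1) (x : ℝ) (hx : |x| ≤ 1) : 0 < 1 + β * x := by
  have h1 : |β * x| < 1 := by
    rw [abs_mul]
    calc |β| * |x| ≤ |β| * 1 := by gcongr
    _ = |β| := mul_one _
    _ < 1 := hβ
  linarith [(abs_lt.1 h1).1]

lemma one_sub_mul_z_pos {β : ℝ} (hβ : |β| < 1) {t : ℝ} (ht : t ∈ Icc (0:ℝ) 1) :
    0 < 1 - t * (-2 * β / (1 - β)) := by
  obtain ⟨hb1, hb2⟩ := abs_lt.1 hβ
  have h1β : 0 < 1 - β := by linarith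
  have key : 0 < 1 - β + 2 * β * t := by
    rcases le_or_gt 0 β with h | h
    · nlinarith [ht.1]
    · nlinarith [ht.2]
  have heq : 1 - t * (-2 * β / (1 - β)) = (1 - β + 2 * β * t) / (1 - β) := by
    field_simp; ring
  rw [heq]; positivity

lemma gfun_intervalIntegrable {β : ℝ} (hβ : |β| < 1) (q : ℕ) (P : ℝ) :
    IntervalIntegrable (gfun β q P) volume 0 1 := by
  obtain ⟨hb1, hb2⟩ := abs_lt.1 hβ
  have h1β : 0 < 1 - β := by linarith
  have hzc : ContinuousOn (fun t : ℝ => (1 - t * (-2 * β / (1 - β))) ^ (-P)) (Icc (0:ℝ) 1) := by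
    apply ContinuousOn.rpow_const
    · exact (continuous_const.sub (continuous_id.mul continuous_const)).continuousOn
    · intro t ht; exact Or.inl (one_sub_mul_z_pos hβ ht).ne'
  have h1 : IntervalIntegrable (gfun β q P) volume 0 (1/2) := by
    have hpow : IntervalIntegrable (fun t : ℝ => t ^ ((q : ℝ) - 1/2)) volume 0 (1/2) := by
      apply intervalIntegral.intervalIntegrable_rpow'
      have : (0:ℝ) ≤ (q : ℝ) := Nat.cast_nonneg q
      linarith
    have hcont : ContinuousOn
        (fun t : ℝ => (1 - t) ^ (-(1/2) : ℝ) * (1 - t * (-2 * β / (1 - β))) ^ (-P))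
        (Set.uIcc (0:ℝ) (1/2)) := by
      rw [uIcc_of_le (by norm_num : (0:ℝ) ≤ 1/2)]
      apply ContinuousOn.mul
      · apply ContinuousOn.rpow_const
        · exact (continuous_const.sub continuous_id).continuousOn
        · intro t ht; left; simp only [mem_Icc] at ht; intro h; linarith [ht.2]
      · exact hzc.mono (fun t ht => by simp only [mem_Icc] at ht ⊢; constructor <;> linarith [ht.1, ht.2])
    have := hpow.mul_continuousOn hcont
    have hfe : (fun t : ℝ => t ^ ((q : ℝ) - 1/2) *
        ((1 - t) ^ (-(1/2) : ℝ) * (1 - t * (-2 * β / (1 - β))) ^ (-P))) = gfun β q P := by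
      funext t; simp only [gfun]; ring
    rwa [hfe] at this
  have h2 : IntervalIntegrable (gfun β q P) volume (1/2) 1 := by
    have hpow0 : IntervalIntegrable (fun t : ℝ => t ^ (-(1/2) : ℝ)) volume 0 (1/2) :=
      intervalIntegral.intervalIntegrable_rpow' (by norm_num)
    have hpow := (hpow0.comp_sub_left 1).symm
    norm_num at hpow
    -- hpow : IntervalIntegrable (fun t => (1 - t) ^ (-(1/2)..)) volume (1/2) 1
    have hcont : ContinuousOn
        (fun t : ℝ => t ^ ((q : ℝ) - 1/2) * (1 - t * (-2 * β / (1 - β))) ^ (-P))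
        (Set.uIcc (1/2:ℝ) 1) := by
      rw [uIcc_of_le (by norm_num : (1/2:ℝ) ≤ 1)]
      apply ContinuousOn.mul
      · apply ContinuousOn.rpow_const continuous_id.continuousOn
        intro t ht; left; simp only [mem_Icc] at ht; simp only [id_eq]
        intro h; rw [h] at ht; linarith [ht.1]
      · exact hzc.mono (fun t ht => by simp only [mem_Icc] at ht ⊢; constructor <;> linarith [ht.1, ht.2])
    have := hpow.continuousOn_mul hcont
    have hfe : (fun t : ℝ => (t ^ ((q : ℝ) - 1/2) * (1 - t * (-2 * β / (1 - β))) ^ (-P)) *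
        (1 - t) ^ (-(1/2) : ℝ)) = gfun β q P := by
      funext t; simp only [gfun]; ring
    rwa [hfe] at this
  exact h1.trans h2

lemma gfun_pointwise {β : ℝ} (hβ : |β| < 1) (q : ℕ) (P : ℝ) {θ : ℝ}
    (hθ : θ ∈ Ioo (0:ℝ) π) :
    (-Real.sin θ / 2) * gfun β q P ((1 + Real.cos θ) / 2)
      = -((1 - β) ^ P * (((1 + Real.cos θ) / 2) ^ q * (1 + β * Real.cos θ) ^ (-P))) := by
  obtain ⟨hb1, hb2⟩ := abs_lt.1 hβ
  have h1β : 0 < 1 - β := by linarith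
  have hs : 0 < Real.sin θ := Real.sin_pos_of_pos_of_lt_pi hθ.1 hθ.2
  have hsc : Real.sin θ ^ 2 + Real.cos θ ^ 2 = 1 := Real.sin_sq_add_cos_sq θ
  have hc1 : Real.cos θ < 1 := by nlinarith
  have hc2 : -1 < Real.cos θ := by nlinarith
  set c := Real.cos θ
  set s := Real.sin θ
  set u := (1 + c) / 2 with hu
  have hu0 : 0 < u := by rw [hu]; linarith
  have hu1 : u < 1 := by rw [hu]; linarith
  have hden : 0 < 1 + β * c := den_pos hβ c (abs_le.2 ⟨hc2.le, hc1.le⟩)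
  have huz : 1 - u * (-2 * β / (1 - β)) = (1 + β * c) / (1 - β) := by
    rw [hu]; field_simp; ring
  have hmid : u ^ ((q : ℝ) - 1/2) = u ^ q * u ^ (-(1/2) : ℝ) := by
    rw [show ((q : ℝ) - 1/2) = (q : ℝ) + (-(1/2)) by ring, Real.rpow_add hu0,
      Real.rpow_natCast]
  have hmulr : u ^ (-(1/2) : ℝ) * (1 - u) ^ (-(1/2) : ℝ) = (s / 2)⁻¹ := by
    rw [← Real.mul_rpow hu0.le (by linarith)]
    have he : u * (1 - u) = (s / 2) ^ 2 := by rw [hu]; field_simp; nlinarith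
    rw [he, ← Real.rpow_natCast (s / 2) 2, ← Real.rpow_mul (by positivity : (0:ℝ) ≤ s / 2)]
    norm_num [Real.rpow_neg_one]
  have hdr : ((1 + β * c) / (1 - β)) ^ (-P) = (1 + β * c) ^ (-P) / (1 - β) ^ (-P) :=
    Real.div_rpow hden.le h1β.le _
  have hnb : (1 - β) ^ (-P) = ((1 - β) ^ P)⁻¹ := by
    rw [Real.rpow_neg h1β.le]
  simp only [gfun, huz, hmid, hdr, hnb]
  rw [mul_assoc (u ^ q), hmulr]
  have hs2 : (s / 2) ≠ 0 := by positivity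
  have hp2 : ((1 - β) ^ P) ≠ 0 := (Real.rpow_pos_of_pos h1β P).ne'
  field_simp

lemma key_subst {β : ℝ} (hβ : |β| < 1) (q : ℕ) (P : ℝ) (hP : 0 < P) :
    ∫ θ in (0:ℝ)..π, ((1 + Real.cos θ) / 2) ^ q / (1 + β * Real.cos θ) ^ P
      = (1 - β) ^ (-P) * ∫ t in (0:ℝ)..1, gfun β q P t := by
  obtain ⟨hb1, hb2⟩ := abs_lt.1 hβ
  have h1β : 0 < 1 - β := by linarith
  have hden : ∀ θ : ℝ, 0 < 1 + β * Real.cos θ := fun θ =>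
    den_pos hβ _ (Real.abs_cos_le_one θ)
  have himage1 : ∀ θ : ℝ, θ ∈ Ioo (0:ℝ) π → (1 + Real.cos θ) / 2 ∈ Ioo (0:ℝ) 1 := by
    intro θ hθ
    have hs : 0 < Real.sin θ := Real.sin_pos_of_pos_of_lt_pi hθ.1 hθ.2
    have hsc := Real.sin_sq_add_cos_sq θ
    constructor
    · nlinarith
    · nlinarith
  have himage2 : ∀ θ : ℝ, (1 + Real.cos θ) / 2 ∈ Icc (0:ℝ) 1 := by
    intro θ
    have h1 := Real.neg_one_le_cos θ
    have h2 := Real.cos_le_one θ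
    constructor <;> [linarith; linarith]
  -- continuity of gfun on Ioo 0 1
  have hgc : ContinuousOn (gfun β q P) (Ioo (0:ℝ) 1) := by
    unfold gfun
    apply ContinuousOn.mul
    apply ContinuousOn.mul
    · exact ContinuousOn.rpow_const continuous_id.continuousOn
        (fun t ht => Or.inl ht.1.ne')
    · exact ContinuousOn.rpow_const (continuous_const.sub continuous_id).continuousOn
        (fun t ht => Or.inl (by simp only [mem_Ioo] at ht; intro h; linarith [ht.2]))
    · exact ContinuousOn.rpow_const
        (continuous_const.sub (continuous_id.mul continuous_const)).continuousOn
        (fun t ht => Or.inl (one_sub_mul_z_pos hβ (Ioo_subset_Icc_self ht)).ne')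
  -- the nice function on the θ side
  set N : ℝ → ℝ := fun θ =>
    -((1 - β) ^ P * (((1 + Real.cos θ) / 2) ^ q * (1 + β * Real.cos θ) ^ (-P))) with hN
  have hNcont : Continuous N := by
    apply Continuous.neg
    apply Continuous.mul continuous_const
    apply Continuous.mul
    · exact (((continuous_const.add Real.continuous_cos).div_const 2).pow q)
    · exact Continuous.rpow_const
        (continuous_const.add (continuous_const.mul Real.continuous_cos))
        (fun θ => Or.inl (hden θ).ne')
  have hsub := intervalIntegral.integral_comp_smul_deriv''' (a := 0) (b := π)
      (f := fun θ => (1 + Real.cos θ) / 2) (f' := fun θ => -Real.sin θ / 2)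
      (g := gfun β q P)
      (by fun_prop)
      (by
        intro x hx
        exact (((Real.hasDerivAt_cos x).const_add 1).div_const 2).hasDerivWithinAt)
      (by
        rw [min_eq_left Real.pi_pos.le, max_eq_right Real.pi_pos.le]
        refine hgc.mono ?_
        rintro _ ⟨θ, hθ, rfl⟩
        exact himage1 θ hθ)
      (by
        refine MeasureTheory.IntegrableOn.mono_set (t := Icc (0:ℝ) 1) ?_ ?_
        · have := gfun_intervalIntegrable hβ q P
          rw [intervalIntegrable_iff', uIcc_of_le zero_le_one] at this
          exact this
        · rintro _ ⟨θ, _, rfl⟩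
          exact himage2 θ)
      (by
        rw [uIcc_of_le Real.pi_pos.le, integrableOn_Icc_iff_integrableOn_Ioo]
        refine IntegrableOn.congr_fun
          ((hNcont.integrableOn_Icc (a := 0) (b := π)).mono_set Ioo_subset_Icc_self)
          ?_ measurableSet_Ioo
        intro θ hθ
        simp only [Function.comp, smul_eq_mul, hN]
        exact (gfun_pointwise hβ q P hθ).symm)
  simp only [Function.comp, smul_eq_mul] at hsub
  rw [show (1 + Real.cos 0) / 2 = (1:ℝ) by norm_num,
    show (1 + Real.cos π) / 2 = (0:ℝ) by rw [Real.cos_pi]; norm_num] at hsub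
  -- replace the LHS of hsub by ∫ N
  have hae : ∀ᵐ x : ℝ, x ∈ Set.uIoc (0:ℝ) π →
      -Real.sin x / 2 * gfun β q P ((1 + Real.cos x) / 2) = N x := by
    have hpi : ∀ᵐ x : ℝ, x ≠ π :=
      compl_mem_ae_iff.mpr (measure_singleton π)
    filter_upwards [hpi] with x hx hmem
    rw [uIoc_of_le Real.pi_pos.le] at hmem
    exact gfun_pointwise hβ q P ⟨hmem.1, lt_of_le_of_ne hmem.2 hx⟩
  rw [intervalIntegral.integral_congr_ae hae] at hsub
  -- compute ∫ N
  have hNint : ∫ θ in (0:ℝ)..π, N θ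
      = -((1 - β) ^ P * ∫ θ in (0:ℝ)..π, ((1 + Real.cos θ) / 2) ^ q * (1 + β * Real.cos θ) ^ (-P)) := by
    simp only [hN]
    rw [intervalIntegral.integral_neg, intervalIntegral.integral_const_mul]
  rw [hNint, intervalIntegral.integral_symm (a := 0) (b := 1)] at hsub
  have hE : (1 - β) ^ P * ∫ θ in (0:ℝ)..π, ((1 + Real.cos θ) / 2) ^ q * (1 + β * Real.cos θ) ^ (-P)
      = ∫ t in (0:ℝ)..1, gfun β q P t := by linear_combination -hsub
  have hdiveq : ∀ θ : ℝ, ((1 + Real.cos θ) / 2) ^ q / (1 + β * Real.cos θ) ^ P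
      = ((1 + Real.cos θ) / 2) ^ q * (1 + β * Real.cos θ) ^ (-P) := by
    intro θ
    rw [Real.rpow_neg (hden θ).le, div_eq_mul_inv]
  rw [intervalIntegral.integral_congr (fun θ _ => hdiveq θ)]
  have hpos : (0:ℝ) < (1 - β) ^ P := Real.rpow_pos_of_pos h1β P
  rw [Real.rpow_neg h1β.le]
  rw [inv_mul_eq_div, eq_div_iff hpos.ne']
  linear_combination hE

lemma hyp_eq {β : ℝ} (hβ : |β| < 1) (q : ℕ) (P : ℝ) (hP : 0 < P) :
    Real.sqrt π * Real.Gamma ((q : ℝ) + 1/2) / Real.Gamma ((q : ℝ) + 1)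
        * hyp2F1 P ((q : ℝ) + 1/2) ((q : ℝ) + 1) (-2 * β / (1 - β))
      = ∫ t in (0:ℝ)..1, gfun β q P t := by
  unfold hyp2F1 gfun
  rw [show ((q : ℝ) + 1 - ((q : ℝ) + 1/2)) = 1/2 by ring,
    show ((q : ℝ) + 1/2 - 1) = (q : ℝ) - 1/2 by ring,
    show ((1:ℝ)/2 - 1) = -(1/2) by norm_num,
    Real.Gamma_one_half_eq]
  have h1 : 0 < Real.Gamma ((q : ℝ) + 1/2) := Real.Gamma_pos_of_pos (by positivity)
  have h2 : 0 < Real.Gamma ((q : ℝ) + 1) := Real.Gamma_pos_of_pos (by positivity)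
  have h3 : (0:ℝ) < Real.sqrt π := Real.sqrt_pos.2 Real.pi_pos
  field_simp
  ring_nf
  congr 1
  funext t
  ring

/-- Normalized (divided by π) form of integral I1. -/
theorem stmt_12 (α β : ℝ) (hβ : |β| < 1) (l : ℕ) (P : ℝ) (hP : 0 < P) :
    (1 / π) * (∫ θ in (0:ℝ)..π, (1 + α * Real.cos θ) ^ l / (1 + β * Real.cos θ) ^ P)
      = (1 / π) * ((1 - β) ^ (-P) *
          ∑ q ∈ Finset.range (l + 1),
            (l.choose q : ℝ) * (2 * α) ^ q * (1 - α) ^ (l - q) *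
              (Real.sqrt π * Real.Gamma ((q : ℝ) + 1/2) / Real.Gamma ((q : ℝ) + 1)) *
              hyp2F1 P ((q : ℝ) + 1/2) ((q : ℝ) + 1) (-2 * β / (1 - β))) := by
  congr 1
  have hden : ∀ θ : ℝ, 0 < 1 + β * Real.cos θ := fun θ =>
    den_pos hβ _ (Real.abs_cos_le_one θ)
  have hexp : ∀ θ : ℝ, (1 + α * Real.cos θ) ^ l / (1 + β * Real.cos θ) ^ P
      = ∑ q ∈ Finset.range (l + 1), (l.choose q : ℝ) * (2 * α) ^ q * (1 - α) ^ (l - q) *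
          (((1 + Real.cos θ) / 2) ^ q / (1 + β * Real.cos θ) ^ P) := by
    intro θ
    have hb : (1 + α * Real.cos θ) ^ l
        = ∑ q ∈ Finset.range (l + 1),
            (2 * α * ((1 + Real.cos θ) / 2)) ^ q * (1 - α) ^ (l - q) * (l.choose q : ℝ) := by
      rw [← add_pow]
      congr 1
      ring
    rw [hb, Finset.sum_div]
    apply Finset.sum_congr rfl
    intro q hq
    rw [mul_pow]
    ring
  rw [intervalIntegral.integral_congr (fun θ _ => hexp θ)]
  rw [intervalIntegral.integral_finset_sum]
  · rw [Finset.mul_sum]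
    apply Finset.sum_congr rfl
    intro q hq
    rw [intervalIntegral.integral_const_mul, key_subst hβ q P hP, ← hyp_eq hβ q P hP]
    ring
  · intro q hq
    apply Continuous.intervalIntegrable
    apply Continuous.mul continuous_const
    apply Continuous.div
    · exact ((continuous_const.add Real.continuous_cos).div_const 2).pow q
    · exact Continuous.rpow_const
        (continuous_const.add (continuous_const.mul Real.continuous_cos))
        (fun θ => Or.inl (hden θ).ne')
    · exact fun θ => (Real.rpow_pos_of_pos (hden θ) P).ne'
end
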